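/- arXiv:2604.20657 — 5 statements merged into one kernel-verified Lean document; each statement's English description precedes it below -/
import Mathlib

section
/- Consider the Exp4 algorithm run for K rounds with p arms, N ≥ 2 experts, exploration parameter γ ∈ (0,1], and integer batch size b with 1 ≤ b ≤ p. The adversary fixes rewards d^k_j with 0 ≤ d^k_j ≤ D for all rounds k ∈ {1,…,K} and arms j ∈ {1,…,p}, and each expert n provides deterministic advice vectors e^{k,n} ∈ bΔ^p; expert 1 is the uniform expert, e^{k,1}_j = b/p for all k, j. On a probability space, random subsets I_1,…,I_K ⊆ {1,…,p} are drawn so that, conditionally on (I_1,…,I_{k−1}), P[j ∈ I_k] = π^k_j almost surely, where the (random) weights and probabilities follow the Exp4 recursion: w_{1,n} = 1, W_k = Σ_{n=1}^N w_{k,n}, π^k_j = (1−γ) Σ_{n=1}^N (w_{k,n}/W_k) e^{k,n}_j + γb/p, d̂^k_j = (d^k_j/π^k_j)·1[j ∈ I_k], and w_{k+1,n} = w_{k,n} exp(γ (Σ_{j=1}^p e^{k,n}_j d̂^k_j)/p). Assume additionally that γ (Σ_{j=1}^p e^{k,n}_j d̂^k_j)/p ≤ 1 holds almost surely for every k and n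 (this holds, e.g., when D ≤ 1). Define C^{K,n} = Σ_{k=1}^K Σ_{j=1}^p e^{k,n}_j d^k_j and the expected regret R^K = max_{n=1,…,N} C^{K,n} − E[Σ_{k=1}^K Σ_{j∈I_k} d^k_j]. Then R^K ≤ ((e−2)bD + 1) γ max_{n=1,…,N} C^{K,n} + (p ln N)/γ. -/
/-!
Exp4 is exponential weights run on importance-weighted reward estimates `d̂`. Pathwise, the
potential argument for exponential weights, with `exp x ≤ 1 + x + (e - 2) x²` on `[0, 1]`, bounds
the estimated gain of any expert by `log N` plus the first two moments of the estimated gains under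
the algorithm's mixture `q`. Since exploration gives `(1 - γ) ∑ₙ qₙ eₙ ≤ π`, the first moment is at
most the collected reward `∑_{j ∈ I_k} d_j`, and by Cauchy–Schwarz with `∑_j e_j = b` the second is
at most `b D ∑_j d̂_j`. In expectation `E[d̂_j] = d_j`, because `π_j` is determined by the past and
`P[j ∈ I_k | past] = π_j`; finally `∑_j d_j` is `p / b` times the gain of the uniform expert.
-/

open MeasureTheory Finset

open Nat in
theorem Real.exp_le_one_add_add_mul_sq {x : ℝ} (hx0 : 0 ≤ x) (hx1 : x ≤ 1) :
    Real.exp x ≤ 1 + x + (Real.exp 1 - 2) * x ^ 2 := by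
  have tail (t : ℝ) : Real.exp t = 1 + t + ∑' n : ℕ, t ^ (n + 2) / (n + 2)! := by
    rw [Real.exp_eq_exp_ℝ, NormedSpace.exp_eq_tsum_div]
    dsimp only
    rw [← (Real.summable_pow_div_factorial t).sum_add_tsum_nat_add 2]
    simp [Finset.sum_range_succ]
  have summable (t : ℝ) : Summable fun n : ℕ => t ^ (n + 2) / (n + 2)! :=
    (Real.summable_pow_div_factorial t).comp_injective (add_left_injective 2)
  have termwise (n : ℕ) : x ^ (n + 2) / (n + 2)! ≤ x ^ 2 * (1 ^ (n + 2) / (n + 2)!) := by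
    rw [one_pow, mul_one_div]
    exact div_le_div_of_nonneg_right (pow_le_pow_of_le_one hx0 hx1 (by omega)) (by positivity)
  have h := (summable x).tsum_le_tsum termwise ((summable 1).mul_left _)
  have tail_one : ∑' n : ℕ, (1 : ℝ) ^ (n + 2) / (n + 2)! = Real.exp 1 - 2 := by
    linarith [tail 1]
  rw [tsum_mul_left, tail_one] at h
  linarith [tail x]

theorem exp_weights_pos {ι : Type*} {K : ℕ} (w : ℕ → ι → ℝ) (x : Fin K → ι → ℝ)
    (hw0 : ∀ i, w 0 i = 1) (hrec : ∀ (k : Fin K) i, w (k + 1) i = w k i * Real.exp (x k i)) :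
    ∀ m ≤ K, ∀ i, 0 < w m i := by
  intro m
  induction m with
  | zero => simp [hw0]
  | succ m ih =>
    intro hm i
    rw [hrec ⟨m, hm⟩]
    exact mul_pos (ih (by omega) i) (Real.exp_pos _)

theorem log_sum_mul_exp_le {ι : Type*} [Fintype ι] {v x : ι → ℝ} (hv : ∀ i, 0 ≤ v i)
    (hV : 0 < ∑ i, v i) (hx0 : ∀ i, 0 ≤ x i) (hx1 : ∀ i, x i ≤ 1) :
    Real.log (∑ i, v i * Real.exp (x i)) ≤
      Real.log (∑ i, v i) + ∑ i, v i / (∑ i', v i') * (x i + (Real.exp 1 - 2) * x i ^ 2) := by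
  set M := ∑ i, v i / (∑ i', v i') * (x i + (Real.exp 1 - 2) * x i ^ 2)
  have hpos : 0 < ∑ i, v i * Real.exp (x i) :=
    hV.trans_le (sum_le_sum fun i _ => le_mul_of_one_le_right (hv i) (Real.one_le_exp (hx0 i)))
  have hquad : ∑ i, v i * Real.exp (x i) ≤ (∑ i, v i) * (1 + M) :=
    calc ∑ i, v i * Real.exp (x i)
        ≤ ∑ i, v i * (1 + (x i + (Real.exp 1 - 2) * x i ^ 2)) := by
          gcongr with i
          · exact hv i
          · linarith [Real.exp_le_one_add_add_mul_sq (hx0 i) (hx1 i)]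
      _ = (∑ i, v i) * (1 + M) := by
          simp only [M, mul_add, mul_one, sum_add_distrib, mul_sum, ← mul_assoc,
            mul_div_cancel₀ _ hV.ne']
  calc Real.log (∑ i, v i * Real.exp (x i))
      ≤ Real.log ((∑ i, v i) * Real.exp M) := by
        gcongr
        exact hquad.trans (by gcongr; linarith [Real.add_one_le_exp M])
    _ = Real.log (∑ i, v i) + M := by rw [Real.log_mul hV.ne' (Real.exp_pos _).ne', Real.log_exp]

theorem sum_le_log_card_add_of_exp_weights {ι : Type*} [Fintype ι] {K : ℕ} (w : ℕ → ι → ℝ)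
    (x : Fin K → ι → ℝ) (hw0 : ∀ i, w 0 i = 1)
    (hrec : ∀ (k : Fin K) i, w (k + 1) i = w k i * Real.exp (x k i))
    (hx0 : ∀ k i, 0 ≤ x k i) (hx1 : ∀ k i, x k i ≤ 1) (i : ι) :
    ∑ k, x k i ≤ Real.log (Fintype.card ι) +
      ∑ k : Fin K, ∑ i', w k i' / (∑ i'', w k i'') * (x k i' + (Real.exp 1 - 2) * x k i' ^ 2) := by
  have hw := exp_weights_pos w x hw0 hrec
  have telescope (f : ℕ → ℝ) : ∑ k : Fin K, (f (k + 1) - f k) = f K - f 0 := by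
    rw [Fin.sum_univ_eq_sum_range (fun k => f (k + 1) - f k), sum_range_sub]
  have gain (k : Fin K) : x k i = Real.log (w (k + 1) i) - Real.log (w k i) := by
    rw [hrec, Real.log_mul (hw k k.2.le i).ne' (Real.exp_pos _).ne', Real.log_exp]
    ring
  have step (k : Fin K) : Real.log (∑ i', w (k + 1) i') - Real.log (∑ i', w k i') ≤
      ∑ i', w k i' / (∑ i'', w k i'') * (x k i' + (Real.exp 1 - 2) * x k i' ^ 2) := by
    simp_rw [hrec k]
    have := log_sum_mul_exp_le (fun i' => (hw k k.2.le i').le)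
      (sum_pos (fun i' _ => hw k k.2.le i') ⟨i, mem_univ i⟩) (hx0 k) (hx1 k)
    linarith
  calc ∑ k, x k i = Real.log (w K i) - Real.log (w 0 i) := by
        simp only [gain]
        exact telescope fun m => Real.log (w m i)
    _ ≤ Real.log (∑ i', w K i') - Real.log (∑ i', w 0 i') + Real.log (Fintype.card ι) := by
        simp only [hw0, Real.log_one, sum_const, card_univ, nsmul_eq_mul, mul_one, sub_zero,
          sub_add_cancel]
        exact Real.log_le_log (hw K le_rfl i)
          (single_le_sum (fun i' _ => (hw K le_rfl i').le) (mem_univ i))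
    _ = ∑ k : Fin K, (Real.log (∑ i', w (k + 1) i') - Real.log (∑ i', w k i')) +
          Real.log (Fintype.card ι) := by rw [telescope (fun m => Real.log (∑ i', w m i'))]
    _ ≤ _ := by rw [add_comm]; gcongr with k; exact step k

section Mixture

variable {ι α : Type*} [Fintype ι] [Fintype α] {a : ℝ} {q : ι → ℝ} {e : ι → α → ℝ} {π z : α → ℝ}

theorem mul_sum_mixture_le (hπ : ∀ j, a * ∑ n, q n * e n j ≤ π j) (hz : ∀ j, 0 ≤ z j) :
    a * ∑ n, q n * ∑ j, e n j * z j ≤ ∑ j, π j * z j :=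
  calc a * ∑ n, q n * ∑ j, e n j * z j = ∑ j, (a * ∑ n, q n * e n j) * z j := by
        simp only [mul_sum, sum_mul, mul_assoc]
        exact sum_comm
    _ ≤ ∑ j, π j * z j := by gcongr with j; exacts [hz j, hπ j]

theorem mul_sum_mixture_sq_le {b D : ℝ} (ha : 0 ≤ a) (hb : 0 ≤ b) (hq : ∀ n, 0 ≤ q n)
    (he : ∀ n j, 0 ≤ e n j) (hesum : ∀ n, ∑ j, e n j = b)
    (hπ : ∀ j, a * ∑ n, q n * e n j ≤ π j) (hz : ∀ j, 0 ≤ z j) (hπz : ∀ j, π j * z j ≤ D) :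
    a * ∑ n, q n * (∑ j, e n j * z j) ^ 2 ≤ b * D * ∑ j, z j := by
  have cauchy_schwarz (n : ι) : (∑ j, e n j * z j) ^ 2 ≤ b * ∑ j, e n j * z j ^ 2 := by
    rw [← hesum n]
    exact sum_sq_le_sum_mul_sum_of_sq_le_mul _ (fun j _ => he n j)
      (fun j _ => mul_nonneg (he n j) (sq_nonneg _)) (fun j _ => le_of_eq (by ring))
  calc a * ∑ n, q n * (∑ j, e n j * z j) ^ 2
      ≤ a * ∑ n, q n * (b * ∑ j, e n j * z j ^ 2) := by
        gcongr with n
        exacts [hq n, cauchy_schwarz n]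
    _ = b * (a * ∑ n, q n * ∑ j, e n j * z j ^ 2) := by
        simp only [mul_left_comm _ b, ← mul_sum]
    _ ≤ b * ∑ j, π j * z j ^ 2 := by
        gcongr
        exact mul_sum_mixture_le hπ fun j => sq_nonneg _
    _ ≤ b * ∑ j, D * z j := by
        refine mul_le_mul_of_nonneg_left (sum_le_sum fun j _ => ?_) hb
        calc π j * z j ^ 2 = π j * z j * z j := by ring
          _ ≤ D * z j := mul_le_mul_of_nonneg_right (hπz j) (hz j)
    _ = b * D * ∑ j, z j := by simp only [mul_sum, mul_assoc]

theorem mixture_quadratic_gain_le {γ c b D : ℝ} (hγ0 : 0 < γ) (hγ1 : γ ≤ 1) (hc : 0 < c)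
    (hb : 0 ≤ b) (hq : ∀ n, 0 ≤ q n) (he : ∀ n j, 0 ≤ e n j) (hesum : ∀ n, ∑ j, e n j = b)
    (hπ : ∀ j, (1 - γ) * ∑ n, q n * e n j ≤ π j) (hz : ∀ j, 0 ≤ z j)
    (hπz : ∀ j, π j * z j ≤ D) {y : ι → ℝ} (hy : ∀ n, y n = ∑ j, e n j * z j) :
    (1 - γ) * (c / γ) * ∑ n, q n * (γ * y n / c + (Real.exp 1 - 2) * (γ * y n / c) ^ 2) ≤
      ∑ j, π j * z j + (Real.exp 1 - 2) * (γ / c) * (b * D * ∑ j, z j) := by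
  have he2 : 0 ≤ Real.exp 1 - 2 := by linarith [Real.add_one_le_exp 1]
  calc (1 - γ) * (c / γ) * ∑ n, q n * (γ * y n / c + (Real.exp 1 - 2) * (γ * y n / c) ^ 2)
      = (1 - γ) * ∑ n, q n * y n +
          (Real.exp 1 - 2) * (γ / c) * ((1 - γ) * ∑ n, q n * y n ^ 2) := by
        simp only [mul_sum, ← sum_add_distrib]
        refine sum_congr rfl fun n _ => ?_
        field_simp
    _ ≤ _ := by
        simp only [hy]
        gcongr ?_ + _ * ?_
        · exact mul_sum_mixture_le hπ hz
        · exact mul_sum_mixture_sq_le (sub_nonneg.2 hγ1) hb hq he hesum hπ hz hπz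

end Mixture

theorem exp4_pathwise_gain_le {ι α : Type*} [Fintype ι] [Fintype α] {K : ℕ} {γ c b D : ℝ}
    (hγ0 : 0 < γ) (hγ1 : γ ≤ 1) (hc : 0 < c) (hb : 0 ≤ b)
    (e : Fin K → ι → α → ℝ) (he0 : ∀ k n j, 0 ≤ e k n j) (hesum : ∀ k n, ∑ j, e k n j = b)
    (z π : Fin K → α → ℝ) (hz : ∀ k j, 0 ≤ z k j) (hπz : ∀ k j, π k j * z k j ≤ D)
    (w : ℕ → ι → ℝ) (y : Fin K → ι → ℝ) (hy : ∀ k n, y k n = ∑ j, e k n j * z k j)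
    (hw0 : ∀ n, w 0 n = 1)
    (hwrec : ∀ (k : Fin K) n, w (k + 1) n = w k n * Real.exp (γ * y k n / c))
    (hπ : ∀ (k : Fin K) j, (1 - γ) * ∑ n, w k n / (∑ n', w k n') * e k n j ≤ π k j)
    (hy1 : ∀ k n, γ * y k n / c ≤ 1) (n : ι) :
    (1 - γ) * ∑ k, y k n ≤ (1 - γ) * (c * Real.log (Fintype.card ι) / γ)
      + ∑ k, ∑ j, π k j * z k j + (Real.exp 1 - 2) * (γ / c) * b * D * ∑ k, ∑ j, z k j := by
  have hq (k : Fin K) (n : ι) : 0 ≤ w k n / ∑ n', w k n' := by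
    have hw := exp_weights_pos w _ hw0 hwrec k k.2.le
    exact div_nonneg (hw n).le (sum_nonneg fun n' _ => (hw n').le)
  have hy0 (k : Fin K) (n : ι) : 0 ≤ y k n := by
    rw [hy]; exact sum_nonneg fun j _ => mul_nonneg (he0 k n j) (hz k j)
  have hedge := sum_le_log_card_add_of_exp_weights w (fun k n => γ * y k n / c) hw0 hwrec
    (fun k n => by have := hy0 k n; positivity) hy1 n
  calc (1 - γ) * ∑ k, y k n
      = (1 - γ) * (c / γ) * ∑ k, γ * y k n / c := by
        simp only [mul_sum]; refine sum_congr rfl fun k _ => ?_; field_simp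
    _ ≤ (1 - γ) * (c / γ) * (Real.log (Fintype.card ι) + ∑ k : Fin K, ∑ n,
          w k n / (∑ n', w k n') * (γ * y k n / c + (Real.exp 1 - 2) * (γ * y k n / c) ^ 2)) :=
        mul_le_mul_of_nonneg_left hedge (mul_nonneg (sub_nonneg.2 hγ1) (by positivity))
    _ = (1 - γ) * (c * Real.log (Fintype.card ι) / γ) + ∑ k : Fin K, (1 - γ) * (c / γ) * ∑ n,
          w k n / (∑ n', w k n') * (γ * y k n / c + (Real.exp 1 - 2) * (γ * y k n / c) ^ 2) := by
        rw [mul_add, mul_sum]; ring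
    _ ≤ (1 - γ) * (c * Real.log (Fintype.card ι) / γ) + ∑ k, (∑ j, π k j * z k j +
          (Real.exp 1 - 2) * (γ / c) * (b * D * ∑ j, z k j)) := by
        gcongr with k
        exact mixture_quadratic_gain_le hγ0 hγ1 hc hb (hq k) (he0 k) (hesum k) (hπ k) (hz k)
          (hπz k) (hy k)
    _ = _ := by simp only [sum_add_distrib, ← mul_sum]; ring

section History

variable {Ω α : Type*} [DecidableEq α] {K : ℕ} (I : Fin K → Ω → Finset α)

abbrev armHistory (m : ℕ) : MeasurableSpace Ω :=
  ⨆ (i : Fin K) (_ : (i : ℕ) < m) (j : α), MeasurableSpace.comap (fun ω => decide (j ∈ I i ω)) ⊤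

theorem armHistory_mono : Monotone (armHistory I) := fun _ _ hmm' =>
  iSup₂_mono' fun i hi => ⟨i, hi.trans_le hmm', le_rfl⟩

theorem measurableSet_armHistory {m : ℕ} {i : Fin K} (hi : (i : ℕ) < m) (j : α) :
    MeasurableSet[armHistory I m] {ω | j ∈ I i ω} := by
  refine MeasurableSpace.le_def.1 (le_iSup₂_of_le i hi (le_iSup_of_le j le_rfl)) _ ?_
  exact ⟨{true}, trivial, by ext; simp⟩

theorem armHistory_le [MeasurableSpace Ω] (hI : ∀ k j, MeasurableSet {ω | j ∈ I k ω}) (m : ℕ) :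
    armHistory I m ≤ ‹MeasurableSpace Ω› :=
  iSup₂_le fun i _ => iSup_le fun j =>
    (measurable_to_bool <| by convert hI i j using 1; ext; simp).comap_le

end History

theorem integrable_ite_div {Ω : Type*} [MeasurableSpace Ω] {μ : Measure Ω} [IsFiniteMeasure μ]
    {P : Ω → Prop} [DecidablePred P] (hP : MeasurableSet {ω | P ω}) {π : Ω → ℝ} (hπm : Measurable π)
    {c : ℝ} (hc : 0 < c) (hπ : ∀ ω, c ≤ π ω) (a : ℝ) :
    Integrable (fun ω => if P ω then a / π ω else 0) μ := by
  refine Integrable.of_bound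
    ((measurable_const.div hπm).ite hP measurable_const).aestronglyMeasurable (|a| / c)
    (ae_of_all _ fun ω => ?_)
  split_ifs
  · rw [norm_div, Real.norm_eq_abs, Real.norm_of_nonneg (hc.trans_le (hπ ω)).le]
    exact div_le_div_of_nonneg_left (abs_nonneg a) hc (hπ ω)
  · simp; positivity

theorem integral_ite_div_of_condExp_eq {Ω : Type*} {m m₀ : MeasurableSpace Ω} {μ : Measure Ω}
    [IsProbabilityMeasure μ] (hm : m ≤ m₀) {P : Ω → Prop} [DecidablePred P]
    (hP : MeasurableSet[m₀] {ω | P ω}) {π : Ω → ℝ} (hπm : Measurable[m] π) (hπ : ∀ ω, π ω ≠ 0)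
    {a : ℝ} (hint : Integrable (fun ω => if P ω then a / π ω else 0) μ)
    (hcond : μ[fun ω => if P ω then (1 : ℝ) else 0 | m] =ᵐ[μ] π) :
    ∫ ω, (if P ω then a / π ω else 0) ∂μ = a := by
  have hind : Integrable (fun ω => if P ω then (1 : ℝ) else 0) μ :=
    Integrable.of_bound (measurable_const.ite hP measurable_const).aestronglyMeasurable 1
      (ae_of_all _ fun ω => by split_ifs <;> simp)
  have hfactor : (fun ω => if P ω then a / π ω else 0) =
      (fun ω => a / π ω) * fun ω => if P ω then (1 : ℝ) else 0 := by
    ext ω; rw [Pi.mul_apply]; split_ifs <;> simp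
  rw [hfactor] at hint ⊢
  have hf : StronglyMeasurable[m] fun ω => a / π ω := (measurable_const.div hπm).stronglyMeasurable
  have hpull := condExp_mul_of_stronglyMeasurable_left hf hint hind
  calc ∫ ω, ((fun ω => a / π ω) * fun ω => if P ω then (1 : ℝ) else 0) ω ∂μ
      = ∫ ω, (μ[(fun ω => a / π ω) * fun ω => if P ω then (1 : ℝ) else 0 | m]) ω ∂μ :=
        (integral_condExp hm).symm
    _ = ∫ _, a ∂μ := integral_congr_ae <| by
        filter_upwards [hpull, hcond] with ω h1 h2
        rw [h1, Pi.mul_apply, h2, div_mul_cancel₀ _ (hπ ω)]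
    _ = a := by simp

theorem integrable_sum_mem {Ω α : Type*} [MeasurableSpace Ω] [Fintype α] [DecidableEq α]
    {μ : Measure Ω} [IsFiniteMeasure μ] {I : Ω → Finset α} (hI : ∀ j, MeasurableSet {ω | j ∈ I ω})
    (f : α → ℝ) : Integrable (fun ω => ∑ j ∈ I ω, f j) μ := by
  have hsum : (fun ω => ∑ j ∈ I ω, f j) = fun ω => ∑ j, if j ∈ I ω then f j else 0 :=
    funext fun ω => by rw [sum_ite_mem, univ_inter]
  rw [hsum]
  refine integrable_finsetSum _ fun j _ => Integrable.of_bound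
    (measurable_const.ite (hI j) measurable_const).aestronglyMeasurable |f j|
    (ae_of_all _ fun ω => ?_)
  split_ifs <;> simp

/-- The Exp4 recursion along every sample path; `β` stands for the exploration mass `γ b / p`
and `c` for the scale `p` in the exponent. -/
structure IsExp4Run {Ω ι α : Type*} [Fintype ι] [Fintype α] [DecidableEq α] {K : ℕ}
    (γ β c : ℝ) (d : Fin K → α → ℝ) (e : Fin K → ι → α → ℝ) (I : Fin K → Ω → Finset α)
    (w : ℕ → ι → Ω → ℝ) (W : ℕ → Ω → ℝ) (π dhat : Fin K → α → Ω → ℝ)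
    (y : Fin K → ι → Ω → ℝ) : Prop where
  weight_zero : ∀ n ω, w 0 n ω = 1
  totalWeight_eq : ∀ k ω, W k ω = ∑ n, w k n ω
  prob_eq : ∀ (k : Fin K) (j : α) (ω : Ω),
    π k j ω = (1 - γ) * (∑ n, (w k n ω / W k ω) * e k n j) + β
  dhat_eq : ∀ (k : Fin K) (j : α) (ω : Ω),
    dhat k j ω = if j ∈ I k ω then d k j / π k j ω else 0
  gain_eq : ∀ (k : Fin K) (n : ι) (ω : Ω), y k n ω = ∑ j, e k n j * dhat k j ω
  weight_succ : ∀ (k : Fin K) (n : ι) (ω : Ω),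
    w ((k : ℕ) + 1) n ω = w k n ω * Real.exp (γ * y k n ω / c)

namespace IsExp4Run

variable {Ω ι α : Type*} [Fintype ι] [Fintype α] [DecidableEq α] {K : ℕ} {γ β c : ℝ}
  {d : Fin K → α → ℝ} {e : Fin K → ι → α → ℝ} {I : Fin K → Ω → Finset α} {w : ℕ → ι → Ω → ℝ}
  {W : ℕ → Ω → ℝ} {π dhat : Fin K → α → Ω → ℝ} {y : Fin K → ι → Ω → ℝ}

theorem weight_pos (h : IsExp4Run γ β c d e I w W π dhat y) (ω : Ω) :
    ∀ m ≤ K, ∀ n, 0 < w m n ω :=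
  exp_weights_pos (fun m n => w m n ω) _ (h.weight_zero · ω) (h.weight_succ · · ω)

theorem mixture_nonneg (h : IsExp4Run γ β c d e I w W π dhat y) (he0 : ∀ k n j, 0 ≤ e k n j)
    (k : Fin K) (j : α) (ω : Ω) : 0 ≤ ∑ n, w k n ω / (∑ n', w k n' ω) * e k n j := by
  have hw := h.weight_pos ω k k.2.le
  exact sum_nonneg fun n _ =>
    mul_nonneg (div_nonneg (hw n).le (sum_nonneg fun n' _ => (hw n').le)) (he0 k n j)

theorem le_prob (h : IsExp4Run γ β c d e I w W π dhat y) (hγ1 : γ ≤ 1)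
    (he0 : ∀ k n j, 0 ≤ e k n j) (k : Fin K) (j : α) (ω : Ω) : β ≤ π k j ω := by
  rw [h.prob_eq, h.totalWeight_eq]
  linarith [mul_nonneg (sub_nonneg.2 hγ1) (h.mixture_nonneg he0 k j ω)]

theorem mixture_le_prob (h : IsExp4Run γ β c d e I w W π dhat y) (hβ : 0 ≤ β) (k : Fin K)
    (j : α) (ω : Ω) : (1 - γ) * ∑ n, w k n ω / (∑ n', w k n' ω) * e k n j ≤ π k j ω := by
  rw [h.prob_eq, h.totalWeight_eq]
  linarith

theorem measurable_prob_of_measurable_weight (h : IsExp4Run γ β c d e I w W π dhat y)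
    {m : MeasurableSpace Ω} {k : Fin K} (hw : ∀ n, Measurable[m] (w k n)) (j : α) :
    Measurable[m] (π k j) := by
  rw [funext (h.prob_eq k j), funext (h.totalWeight_eq k)]
  fun_prop

theorem measurable_weight (h : IsExp4Run γ β c d e I w W π dhat y) :
    ∀ m ≤ K, ∀ n, Measurable[armHistory I m] (w m n) := by
  intro m
  induction m with
  | zero => intro _ n; rw [funext (h.weight_zero n)]; exact measurable_const
  | succ m ih =>
    intro hm n
    set k : Fin K := ⟨m, hm⟩
    have hw (n : ι) : Measurable[armHistory I (m + 1)] (w k n) :=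
      (ih (by omega) n).mono (armHistory_mono I m.le_succ) le_rfl
    have hdhat (j : α) : Measurable[armHistory I (m + 1)] (dhat k j) := by
      rw [funext (h.dhat_eq k j)]
      exact (measurable_const.div (h.measurable_prob_of_measurable_weight hw j)).ite
        (measurableSet_armHistory I m.lt_succ_self j) measurable_const
    rw [funext (h.weight_succ k n), funext (h.gain_eq k n)]
    fun_prop

theorem measurable_prob (h : IsExp4Run γ β c d e I w W π dhat y) (k : Fin K) (j : α) :
    Measurable[armHistory I k] (π k j) :=
  h.measurable_prob_of_measurable_weight (h.measurable_weight k k.2.le) j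

theorem prob_mul_dhat (h : IsExp4Run γ β c d e I w W π dhat y) {k : Fin K} {j : α} {ω : Ω}
    (hπ : π k j ω ≠ 0) : π k j ω * dhat k j ω = if j ∈ I k ω then d k j else 0 := by
  rw [h.dhat_eq]
  split_ifs
  · exact mul_div_cancel₀ _ hπ
  · exact mul_zero _

theorem dhat_nonneg (h : IsExp4Run γ β c d e I w W π dhat y) {k : Fin K} {j : α} {ω : Ω}
    (hd : 0 ≤ d k j) (hπ : 0 < π k j ω) : 0 ≤ dhat k j ω := by
  rw [h.dhat_eq]
  split_ifs
  exacts [div_nonneg hd hπ.le, le_rfl]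

theorem pathwise_gain_le (h : IsExp4Run γ β c d e I w W π dhat y) (hγ0 : 0 < γ)
    (hγ1 : γ ≤ 1) (hβ : 0 < β) (hc : 0 < c) {b D : ℝ} (hb : 0 ≤ b)
    (hd : ∀ k j, d k j ∈ Set.Icc 0 D) (he0 : ∀ k n j, 0 ≤ e k n j)
    (hesum : ∀ k n, ∑ j, e k n j = b) {ω : Ω} (hω : ∀ k n, γ * y k n ω / c ≤ 1) (n : ι) :
    (1 - γ) * ∑ k, y k n ω ≤ (1 - γ) * (c * Real.log (Fintype.card ι) / γ) +
      ∑ k, ∑ j ∈ I k ω, d k j + (Real.exp 1 - 2) * (γ / c) * b * D * ∑ k, ∑ j, dhat k j ω := by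
  have hπ_pos (k : Fin K) (j : α) : 0 < π k j ω := hβ.trans_le (h.le_prob hγ1 he0 k j ω)
  have hselected (k : Fin K) (j : α) := h.prob_mul_dhat (hπ_pos k j).ne'
  have hπz (k : Fin K) (j : α) : π k j ω * dhat k j ω ≤ D := by
    rw [hselected]
    split_ifs
    exacts [(hd k j).2, (hd k j).1.trans (hd k j).2]
  have := exp4_pathwise_gain_le hγ0 hγ1 hc hb e he0 hesum (fun k j => dhat k j ω)
    (fun k j => π k j ω) (fun k j => h.dhat_nonneg (hd k j).1 (hπ_pos k j)) hπz
    (fun m n => w m n ω) (fun k n => y k n ω) (fun k n => h.gain_eq k n ω) (h.weight_zero · ω)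
    (h.weight_succ · · ω) (fun k j => h.mixture_le_prob hβ.le k j ω) hω n
  simpa only [hselected, sum_ite_mem, univ_inter] using this

variable [MeasurableSpace Ω] {μ : Measure Ω}

theorem integrable_dhat (h : IsExp4Run γ β c d e I w W π dhat y) [IsFiniteMeasure μ]
    (hγ1 : γ ≤ 1) (hβ : 0 < β) (he0 : ∀ k n j, 0 ≤ e k n j)
    (hI : ∀ k j, MeasurableSet {ω | j ∈ I k ω}) (k : Fin K) (j : α) : Integrable (dhat k j) μ := by
  rw [funext (h.dhat_eq k j)]
  exact integrable_ite_div (hI k j) ((h.measurable_prob k j).mono (armHistory_le I hI k) le_rfl)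
    hβ (h.le_prob hγ1 he0 k j) _

theorem integral_dhat (h : IsExp4Run γ β c d e I w W π dhat y) [IsProbabilityMeasure μ]
    (hγ1 : γ ≤ 1) (hβ : 0 < β) (he0 : ∀ k n j, 0 ≤ e k n j)
    (hI : ∀ k j, MeasurableSet {ω | j ∈ I k ω})
    (hcond : ∀ (k : Fin K) j,
      μ[fun ω => if j ∈ I k ω then (1 : ℝ) else 0 | armHistory I k] =ᵐ[μ] π k j)
    (k : Fin K) (j : α) : ∫ ω, dhat k j ω ∂μ = d k j := by
  have hint := h.integrable_dhat (μ := μ) hγ1 hβ he0 hI k j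
  rw [funext (h.dhat_eq k j)] at hint ⊢
  exact integral_ite_div_of_condExp_eq (armHistory_le I hI k) (hI k j) (h.measurable_prob k j)
    (fun ω => (hβ.trans_le (h.le_prob hγ1 he0 k j ω)).ne') hint (hcond k j)

theorem expected_gain_le (h : IsExp4Run γ β c d e I w W π dhat y) [IsProbabilityMeasure μ]
    (hγ0 : 0 < γ) (hγ1 : γ ≤ 1) (hβ : 0 < β) (hc : 0 < c) {b D : ℝ} (hb : 0 ≤ b)
    (hd : ∀ k j, d k j ∈ Set.Icc 0 D) (he0 : ∀ k n j, 0 ≤ e k n j)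
    (hesum : ∀ k n, ∑ j, e k n j = b) (hI : ∀ k j, MeasurableSet {ω | j ∈ I k ω})
    (hbound : ∀ᵐ ω ∂μ, ∀ k n, γ * y k n ω / c ≤ 1)
    (hcond : ∀ (k : Fin K) j,
      μ[fun ω => if j ∈ I k ω then (1 : ℝ) else 0 | armHistory I k] =ᵐ[μ] π k j) (n : ι) :
    (1 - γ) * ∑ k, ∑ j, e k n j * d k j ≤ (1 - γ) * (c * Real.log (Fintype.card ι) / γ) +
      ∫ ω, (∑ k, ∑ j ∈ I k ω, d k j) ∂μ + (Real.exp 1 - 2) * (γ / c) * b * D * ∑ k, ∑ j, d k j := by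
  have hdhat_int := h.integrable_dhat (μ := μ) hγ1 hβ he0 hI
  have hdhat_mean := h.integral_dhat hγ1 hβ he0 hI hcond
  have hy_int (k : Fin K) : Integrable (y k n) μ := by
    rw [funext (h.gain_eq k n)]
    exact integrable_finsetSum _ fun j _ => (hdhat_int k j).const_mul _
  have hy_mean (k : Fin K) : ∫ ω, y k n ω ∂μ = ∑ j, e k n j * d k j := by
    rw [funext (h.gain_eq k n), integral_finsetSum _ fun j _ => (hdhat_int k j).const_mul _]
    simp only [integral_const_mul, hdhat_mean]
  have hdhat_sum_int (k : Fin K) : Integrable (fun ω => ∑ j, dhat k j ω) μ :=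
    integrable_finsetSum _ fun j _ => hdhat_int k j
  have hT_int : Integrable (fun ω => ∑ k, ∑ j, dhat k j ω) μ :=
    integrable_finsetSum _ fun k _ => hdhat_sum_int k
  have hT_mean : ∫ ω, ∑ k, ∑ j, dhat k j ω ∂μ = ∑ k, ∑ j, d k j := by
    rw [integral_finsetSum _ fun k _ => hdhat_sum_int k]
    simp only [integral_finsetSum _ fun j _ => hdhat_int _ j, hdhat_mean]
  have hS_int : Integrable (fun ω => ∑ k, ∑ j ∈ I k ω, d k j) μ :=
    integrable_finsetSum _ fun k _ => integrable_sum_mem (hI k) (d k)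
  calc (1 - γ) * ∑ k, ∑ j, e k n j * d k j = ∫ ω, (1 - γ) * ∑ k, y k n ω ∂μ := by
        rw [integral_const_mul, integral_finsetSum _ fun k _ => hy_int k]
        simp only [hy_mean]
    _ ≤ ∫ ω, ((1 - γ) * (c * Real.log (Fintype.card ι) / γ) + ∑ k, ∑ j ∈ I k ω, d k j +
          (Real.exp 1 - 2) * (γ / c) * b * D * ∑ k, ∑ j, dhat k j ω) ∂μ :=
        integral_mono_ae ((integrable_finsetSum _ fun k _ => hy_int k).const_mul _)
          (((integrable_const _).add hS_int).add (hT_int.const_mul _))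
          (hbound.mono fun ω hω => h.pathwise_gain_le hγ0 hγ1 hβ hc hb hd he0 hesum hω n)
    _ = _ := by
        rw [integral_add ?_ (hT_int.const_mul _), integral_add (integrable_const _) hS_int,
          integral_const, integral_const_mul, hT_mean]
        · simp
        · exact (integrable_const _).add hS_int

end IsExp4Run

theorem exp4_expected_regret_bound
    {Ω : Type*} [MeasurableSpace Ω] (μ : Measure Ω) [IsProbabilityMeasure μ]
    (p N K : ℕ) (hp : 0 < p) (hN : 2 ≤ N) (hK : 0 < K)
    (γ : ℝ) (hγ : γ ∈ Set.Ioc (0 : ℝ) 1)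
    (b : ℕ) (hb : 1 ≤ b)
    (D : ℝ)
    (d : Fin K → Fin p → ℝ) (hd : ∀ k j, d k j ∈ Set.Icc (0 : ℝ) D)
    (e : Fin K → Fin N → Fin p → ℝ)
    (he0 : ∀ k n j, 0 ≤ e k n j)
    (hesum : ∀ k n, ∑ j, e k n j = (b : ℝ))
    (huniform : ∀ k j, e k ⟨0, by omega⟩ j = (b : ℝ) / p)
    (I : Fin K → Ω → Finset (Fin p))
    (hImeas : ∀ k j, MeasurableSet {ω | j ∈ I k ω})
    (w : ℕ → Fin N → Ω → ℝ)
    (W : ℕ → Ω → ℝ)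
    (π : Fin K → Fin p → Ω → ℝ)
    (dhat : Fin K → Fin p → Ω → ℝ)
    (y : Fin K → Fin N → Ω → ℝ)
    (hw0 : ∀ n ω, w 0 n ω = 1)
    (hW : ∀ k ω, W k ω = ∑ n, w k n ω)
    (hπ : ∀ (k : Fin K) (j : Fin p) (ω : Ω),
      π k j ω = (1 - γ) * (∑ n, (w k n ω / W k ω) * e k n j) + γ * b / p)
    (hdhat : ∀ (k : Fin K) (j : Fin p) (ω : Ω),
      dhat k j ω = if j ∈ I k ω then d k j / π k j ω else 0)
    (hy : ∀ (k : Fin K) (n : Fin N) (ω : Ω), y k n ω = ∑ j, e k n j * dhat k j ω)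
    (hwrec : ∀ (k : Fin K) (n : Fin N) (ω : Ω),
      w ((k : ℕ) + 1) n ω = w k n ω * Real.exp (γ * y k n ω / p))
    (hbound : ∀ᵐ ω ∂μ, ∀ (k : Fin K) (n : Fin N), γ * y k n ω / p ≤ 1)
    (hcond : ∀ (k : Fin K) (j : Fin p),
      μ[(fun ω => if j ∈ I k ω then (1 : ℝ) else 0) |
          ⨆ (i : Fin K) (_ : (i : ℕ) < (k : ℕ)) (j' : Fin p),
            MeasurableSpace.comap (fun ω => decide (j' ∈ I i ω)) ⊤]
        =ᵐ[μ] fun ω => π k j ω) :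
    (⨆ n : Fin N, ∑ k, ∑ j, e k n j * d k j)
        - ∫ ω, (∑ k, ∑ j ∈ I k ω, d k j) ∂μ
      ≤ ((Real.exp 1 - 2) * b * D + 1) * γ * (⨆ n : Fin N, ∑ k, ∑ j, e k n j * d k j)
          + p * Real.log N / γ := by
  obtain ⟨hγ0, hγ1⟩ := hγ
  have hp' : (0 : ℝ) < p := by exact_mod_cast hp
  have hb' : (1 : ℝ) ≤ b := by exact_mod_cast hb
  have hD : 0 ≤ D := (hd ⟨0, hK⟩ ⟨0, hp⟩).1.trans (hd _ _).2
  have he2 : 0 ≤ Real.exp 1 - 2 := by linarith [Real.add_one_le_exp 1]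
  have hlog : 0 ≤ p * Real.log N / γ := by
    have := Real.log_nonneg (show (1 : ℝ) ≤ N by exact_mod_cast (by omega : 1 ≤ N)); positivity
  have run : IsExp4Run γ (γ * b / p) p d e I w W π dhat y := ⟨hw0, hW, hπ, hdhat, hy, hwrec⟩
  set C : Fin N → ℝ := fun n => ∑ k, ∑ j, e k n j * d k j
  set G := ∫ ω, (∑ k, ∑ j ∈ I k ω, d k j) ∂μ
  set n₀ : Fin N := ⟨0, by omega⟩
  have hgain (n : Fin N) : (1 - γ) * C n ≤
      (1 - γ) * (p * Real.log N / γ) + G + (Real.exp 1 - 2) * D * (γ * C n₀) := by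
    have huniform_gain : γ / p * b * ∑ k, ∑ j, d k j = γ * C n₀ := by
      simp only [C, n₀, huniform, ← mul_sum]
      field_simp
    calc (1 - γ) * C n ≤ _ := run.expected_gain_le hγ0 hγ1 (by positivity) hp' (by positivity) hd
          he0 hesum hImeas hbound hcond n
      _ = _ := by rw [Fintype.card_fin, ← huniform_gain]; ring
  have : Nonempty (Fin N) := ⟨n₀⟩
  have hC_le (n : Fin N) : C n ≤ ⨆ n, C n := le_ciSup (Set.finite_range C).bddAbove n
  have hC₀ : 0 ≤ C n₀ :=
    sum_nonneg fun k _ => sum_nonneg fun j _ => mul_nonneg (he0 _ _ _) (hd k j).1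
  have hDC : D * C n₀ ≤ b * D * ⨆ n, C n := by
    nlinarith [mul_le_mul_of_nonneg_left (hC_le n₀) hD, mul_nonneg hD (hC₀.trans (hC_le n₀))]
  refine sub_le_iff_le_add.2 (ciSup_le fun n => ?_)
  nlinarith [hgain n, mul_le_mul_of_nonneg_left (hC_le n) hγ0.le,
    mul_le_mul_of_nonneg_left hDC (mul_nonneg he2 hγ0.le), mul_nonneg hγ0.le hlog]
end

section
/- Let N ≥ 1, K ≥ 2, γ > 0, p > 0, and let y_{k,n} (for k = 1,…,K−1 and n = 1,…,N) be reals with 0 ≤ γ y_{k,n}/p ≤ 1. Define weights by w_{1,n} = 1 and w_{k+1,n} = w_{k,n}·exp(γ y_{k,n}/p), set W_k = Σ_{n=1}^N w_{k,n} and q_{k,n} = w_{k,n}/W_k. Then ln(W_K / W_1) ≤ Σ_{k=1}^{K−1} [ (γ/p) Σ_{n=1}^N q_{k,n} y_{k,n} + (e−2)(γ/p)² Σ_{n=1}^N q_{k,n} y_{k,n}² ]. -/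
/-!
Each round multiplies the total weight by `W (k+1) / W k = ∑ n, q k n * exp (x n)` with
`x n = γ * y k n / p ∈ [0, 1]`. On `[0, 1]` the tail `∑_{m ≥ 2} x^m / m!` of the exponential series
is at most `x^2 ∑_{m ≥ 2} 1 / m! = (e - 2) x^2`, and `log t ≤ t - 1`; summing the resulting
per-round bound telescopes `log (W K / W 1)`.
-/

open Real Finset

namespace Real

theorem hasSum_pow_add_two_div_factorial (x : ℝ) :
    HasSum (fun m : ℕ => x ^ (m + 2) / (m + 2).factorial) (exp x - 1 - x) := by
  have h := (hasSum_nat_add_iff' 2).mpr (NormedSpace.expSeries_div_hasSum_exp x)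
  simpa [exp_eq_exp_ℝ, sum_range_succ, sub_sub] using h

theorem exp_le_one_add_add_mul_sq_s5 {x : ℝ} (h0 : 0 ≤ x) (h1 : x ≤ 1) :
    exp x ≤ 1 + x + (exp 1 - 2) * x ^ 2 := by
  have h := hasSum_le (fun m => ?_) (hasSum_pow_add_two_div_factorial x)
    ((hasSum_pow_add_two_div_factorial 1).mul_left (x ^ 2))
  · linarith [show exp 1 - 1 - 1 = exp 1 - 2 by ring]
  · rw [one_pow, mul_one_div]
    exact div_le_div_of_nonneg_right (pow_le_pow_of_le_one h0 h1 (by omega)) (by positivity)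

end Real

theorem log_sum_mul_exp_le_s5 {ι : Type*} [Fintype ι] (q y : ι → ℝ) (c : ℝ)
    (hq : ∀ i, 0 ≤ q i) (hq1 : ∑ i, q i = 1) (hcy : ∀ i, 0 ≤ c * y i ∧ c * y i ≤ 1) :
    log (∑ i, q i * exp (c * y i)) ≤
      c * ∑ i, q i * y i + (exp 1 - 2) * c ^ 2 * ∑ i, q i * y i ^ 2 := by
  have hpos : 0 < ∑ i, q i * exp (c * y i) := by
    refine one_pos.trans_le ?_
    calc (1 : ℝ) = ∑ i, q i * 1 := by simp only [mul_one, hq1]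
      _ ≤ ∑ i, q i * exp (c * y i) :=
        sum_le_sum fun i _ => mul_le_mul_of_nonneg_left (one_le_exp (hcy i).1) (hq i)
  calc log (∑ i, q i * exp (c * y i)) ≤ (∑ i, q i * exp (c * y i)) - 1 :=
        log_le_sub_one_of_pos hpos
    _ ≤ (∑ i, q i * (1 + c * y i + (exp 1 - 2) * (c * y i) ^ 2)) - 1 := by
        gcongr with i
        · exact hq i
        · exact exp_le_one_add_add_mul_sq_s5 (hcy i).1 (hcy i).2
    _ = c * ∑ i, q i * y i + (exp 1 - 2) * c ^ 2 * ∑ i, q i * y i ^ 2 := by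
        rw [← sum_congr rfl fun i _ => (by ring : q i + c * (q i * y i) +
          (exp 1 - 2) * c ^ 2 * (q i * y i ^ 2) = q i * (1 + c * y i + (exp 1 - 2) * (c * y i) ^ 2)),
          sum_add_distrib, sum_add_distrib, ← mul_sum, ← mul_sum, hq1]
        ring

theorem pos_of_mul_exp_recursion {ι : Type*} {K : ℕ} {w a : ℕ → ι → ℝ} (hw1 : ∀ n, w 1 n = 1)
    (hwrec : ∀ k ∈ Ico 1 K, ∀ n, w (k + 1) n = w k n * exp (a k n)) :
    ∀ k ∈ Icc 1 K, ∀ n, 0 < w k n := by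
  intro k hk
  obtain ⟨hk1, hkK⟩ := mem_Icc.mp hk
  induction k, hk1 using Nat.le_induction with
  | base => simp [hw1]
  | succ k hk1 ih =>
    intro n
    rw [hwrec k (mem_Ico.mpr ⟨hk1, hkK⟩) n]
    exact mul_pos (ih (mem_Icc.mpr ⟨hk1, by omega⟩) (by omega) n) (exp_pos _)

theorem exp4_log_weight_upper_bound_general (N K : ℕ) (hN : 1 ≤ N) (hK : 2 ≤ K)
    (γ p : ℝ)
    (y : ℕ → Fin N → ℝ)
    (hy : ∀ k ∈ Finset.Ico 1 K, ∀ n, 0 ≤ γ * y k n / p ∧ γ * y k n / p ≤ 1)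
    (w : ℕ → Fin N → ℝ)
    (hw1 : ∀ n, w 1 n = 1)
    (hwrec : ∀ k ∈ Finset.Ico 1 K, ∀ n, w (k + 1) n = w k n * Real.exp (γ * y k n / p))
    (W : ℕ → ℝ) (hW : ∀ k, W k = ∑ n, w k n)
    (q : ℕ → Fin N → ℝ) (hq : ∀ k n, q k n = w k n / W k) :
    Real.log (W K / W 1) ≤
      ∑ k ∈ Finset.Ico 1 K,
        ((γ / p) * ∑ n, q k n * y k n
          + (Real.exp 1 - 2) * (γ / p) ^ 2 * ∑ n, q k n * y k n ^ 2) := by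
  have : Nonempty (Fin N) := Fin.pos_iff_nonempty.mp hN
  have hw_pos := pos_of_mul_exp_recursion hw1 hwrec
  have hW_pos : ∀ k ∈ Icc 1 K, 0 < W k := fun k hk =>
    hW k ▸ sum_pos (fun n _ => hw_pos k hk n) univ_nonempty
  have hround : ∀ k ∈ Ico 1 K, log (W (k + 1)) - log (W k) ≤
      (γ / p) * ∑ n, q k n * y k n + (exp 1 - 2) * (γ / p) ^ 2 * ∑ n, q k n * y k n ^ 2 := by
    intro k hk
    have hWk := hW_pos k (Ico_subset_Icc_self hk)
    have hratio : W (k + 1) / W k = ∑ n, q k n * exp (γ / p * y k n) := by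
      rw [hW (k + 1), sum_div]
      exact sum_congr rfl fun n _ => by rw [hwrec k hk n, hq, mul_div_right_comm γ]; ring
    have hq1 : ∑ n, q k n = 1 := by
      simp only [hq, ← sum_div, ← hW k, div_self hWk.ne']
    rw [← log_div (hW_pos (k + 1) (by simp at hk ⊢; omega)).ne' hWk.ne', hratio]
    refine log_sum_mul_exp_le_s5 _ _ _ (fun n => ?_) hq1 fun n => ?_
    · exact hq k n ▸ div_nonneg (hw_pos k (Ico_subset_Icc_self hk) n).le hWk.le
    · simpa only [mul_div_right_comm] using hy k hk n
  calc log (W K / W 1) = ∑ k ∈ Ico 1 K, (log (W (k + 1)) - log (W k)) := by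
        rw [sum_Ico_sub (fun k => log (W k)) (by omega), log_div (hW_pos K (by simp; omega)).ne'
          (hW_pos 1 (by simp; omega)).ne']
    _ ≤ _ := sum_le_sum hround

theorem exp4_log_weight_upper_bound (N K : ℕ) (hN : 1 ≤ N) (hK : 2 ≤ K)
    (γ p : ℝ) (hγ : 0 < γ) (hp : 0 < p)
    (y : ℕ → Fin N → ℝ)
    (hy : ∀ k ∈ Finset.Ico 1 K, ∀ n, 0 ≤ γ * y k n / p ∧ γ * y k n / p ≤ 1)
    (w : ℕ → Fin N → ℝ)
    (hw1 : ∀ n, w 1 n = 1)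
    (hwrec : ∀ k ∈ Finset.Ico 1 K, ∀ n, w (k + 1) n = w k n * Real.exp (γ * y k n / p))
    (W : ℕ → ℝ) (hW : ∀ k, W k = ∑ n, w k n)
    (q : ℕ → Fin N → ℝ) (hq : ∀ k n, q k n = w k n / W k) :
    Real.log (W K / W 1) ≤
      ∑ k ∈ Finset.Ico 1 K,
        ((γ / p) * ∑ n, q k n * y k n
          + (Real.exp 1 - 2) * (γ / p) ^ 2 * ∑ n, q k n * y k n ^ 2) :=
  exp4_log_weight_upper_bound_general N K hN hK γ p y hy w hw1 hwrec W hW q hq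
end

section
/- Let p ≥ 1, N ≥ 1, let b > 0, γ ∈ (0,1), let q_1,…,q_N ≥ 0 with Σ_n q_n = 1, and for each n let e^n ∈ ℝ^p have nonnegative entries with Σ_{j=1}^p e^n_j = b. Define π_j = (1−γ) Σ_{n=1}^N q_n e^n_j + γb/p for j = 1,…,p (so π_j ≥ γb/p > 0). Let I ⊆ {1,…,p}, let d_1,…,d_p ≥ 0, and set d̂_j = d_j/π_j for j ∈ I and d̂_j = 0 otherwise, and y_n = Σ_{j=1}^p e^n_j d̂_j. Then Σ_{n=1}^N q_n y_n ≤ (1/(1−γ)) Σ_{j∈I} d_j. -/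
theorem exp4_first_moment_bound (p N : ℕ) (hp : 1 ≤ p) (hN : 1 ≤ N)
    (b γ : ℝ) (hb : 0 < b) (hγ : γ ∈ Set.Ioo (0 : ℝ) 1)
    (q : Fin N → ℝ) (hq0 : ∀ n, 0 ≤ q n) (hq1 : ∑ n, q n = 1)
    (e : Fin N → Fin p → ℝ) (he0 : ∀ n j, 0 ≤ e n j) (hesum : ∀ n, ∑ j, e n j = b)
    (π : Fin p → ℝ)
    (hπ : ∀ j, π j = (1 - γ) * ∑ n, q n * e n j + γ * b / p)
    (I : Finset (Fin p)) (d : Fin p → ℝ) (hd : ∀ j, 0 ≤ d j)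
    (dhat : Fin p → ℝ)
    (hdhat : ∀ j, dhat j = if j ∈ I then d j / π j else 0)
    (y : Fin N → ℝ) (hy : ∀ n, y n = ∑ j, e n j * dhat j) :
    ∑ n, q n * y n ≤ (1 / (1 - γ)) * ∑ j ∈ I, d j := by
  obtain ⟨hγ0, hγ1⟩ := hγ
  have h1γ : 0 < 1 - γ := by linarith
  have hppos : (0:ℝ) < p := by exact_mod_cast hp
  have hgb : 0 < γ * b / p := by positivity
  have hπpos : ∀ j, 0 < π j := by
    intro j
    have hsum : 0 ≤ ∑ n, q n * e n j :=
      Finset.sum_nonneg fun n _ => mul_nonneg (hq0 n) (he0 n j)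
    rw [hπ]
    nlinarith
  have hdhat0 : ∀ j, 0 ≤ dhat j := by
    intro j; rw [hdhat]
    split
    · exact div_nonneg (hd j) (hπpos j).le
    · exact le_refl 0
  calc ∑ n, q n * y n = ∑ j, (∑ n, q n * e n j) * dhat j := by
        simp_rw [hy, Finset.mul_sum]
        rw [Finset.sum_comm]
        simp_rw [Finset.sum_mul, mul_assoc]
    _ ≤ ∑ j, (π j / (1 - γ)) * dhat j := by
        apply Finset.sum_le_sum; intro j _
        apply mul_le_mul_of_nonneg_right _ (hdhat0 j)
        rw [le_div_iff₀ h1γ, hπ j]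
        nlinarith
    _ = (1 / (1 - γ)) * ∑ j, π j * dhat j := by
        rw [Finset.mul_sum]; apply Finset.sum_congr rfl; intro j _; ring
    _ = (1 / (1 - γ)) * ∑ j ∈ I, d j := by
        congr 1
        rw [← Finset.sum_filter_add_sum_filter_not Finset.univ (· ∈ I)]
        have h2 : ∑ j ∈ Finset.univ.filter (¬ · ∈ I), π j * dhat j = 0 := by
          apply Finset.sum_eq_zero; intro j hj
          simp only [Finset.mem_filter] at hj
          rw [hdhat, if_neg hj.2, mul_zero]
        rw [h2, add_zero]
        rw [Finset.filter_mem_eq_inter, Finset.univ_inter]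
        apply Finset.sum_congr rfl; intro j hj
        rw [hdhat, if_pos hj, mul_div_cancel₀ _ (hπpos j).ne']
end

section
/- Let p ≥ 1, N ≥ 1, let b > 0, γ ∈ (0,1), D ≥ 0, let q_1,…,q_N ≥ 0 with Σ_n q_n = 1, and for each n let e^n ∈ ℝ^p have nonnegative entries with Σ_{j=1}^p e^n_j = b. Define π_j = (1−γ) Σ_{n=1}^N q_n e^n_j + γb/p. Let I ⊆ {1,…,p}, let d_1,…,d_p satisfy 0 ≤ d_j ≤ D, and set d̂_j = d_j/π_j for j ∈ I and d̂_j = 0 otherwise, and y_n = Σ_{j=1}^p e^n_j d̂_j. Then Σ_{n=1}^N q_n y_n² ≤ (bD/(1−γ)) · Σ_{j∈I} d̂_j. -/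
/-!
By Cauchy–Schwarz against the weights `e n`, which have total mass `b`, each `y n ^ 2` is at most
`b * ∑ j, e n j * dhat j ^ 2`. Averaging over `q` turns the weights into the mixture
`∑ n, q n * e n j ≤ π j / (1 - γ)`, and importance weighting gives
`π j * dhat j ^ 2 = d j * dhat j ≤ D * dhat j`.
-/

open Finset

theorem sum_mul_sq_sum_mul_le {κ ι : Type*} (s : Finset κ) (t : Finset ι) {q : κ → ℝ}
    {e : κ → ι → ℝ} {b : ℝ} (hq : ∀ n ∈ s, 0 ≤ q n) (he : ∀ n ∈ s, ∀ j ∈ t, 0 ≤ e n j)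
    (hsum : ∀ n ∈ s, ∑ j ∈ t, e n j = b) (x : ι → ℝ) :
    ∑ n ∈ s, q n * (∑ j ∈ t, e n j * x j) ^ 2 ≤
      b * ∑ j ∈ t, (∑ n ∈ s, q n * e n j) * x j ^ 2 := by
  have cauchy_schwarz : ∀ n ∈ s, (∑ j ∈ t, e n j * x j) ^ 2 ≤ b * ∑ j ∈ t, e n j * x j ^ 2 :=
    fun n hn => hsum n hn ▸ sum_sq_le_sum_mul_sum_of_sq_le_mul t (he n hn)
      (fun j hj => mul_nonneg (he n hn j hj) (sq_nonneg _)) (fun _ _ => le_of_eq (by ring))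
  calc ∑ n ∈ s, q n * (∑ j ∈ t, e n j * x j) ^ 2
      ≤ ∑ n ∈ s, q n * (b * ∑ j ∈ t, e n j * x j ^ 2) :=
        sum_le_sum fun n hn => mul_le_mul_of_nonneg_left (cauchy_schwarz n hn) (hq n hn)
    _ = b * ∑ j ∈ t, (∑ n ∈ s, q n * e n j) * x j ^ 2 := by
        simp only [mul_sum, sum_mul]
        rw [sum_comm]
        exact sum_congr rfl fun _ _ => sum_congr rfl fun _ _ => by ring

theorem mul_div_sq_le {π d D : ℝ} (hπ : 0 ≤ π) (hd : 0 ≤ d) (hdD : d ≤ D) :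
    π * (d / π) ^ 2 ≤ D * (d / π) := by
  have hπd : π * (d / π) ^ 2 = d * (d / π) := by
    rcases hπ.eq_or_lt with rfl | hπ
    · simp
    · field_simp
  rw [hπd]
  exact mul_le_mul_of_nonneg_right hdD (div_nonneg hd hπ)

theorem exp4_second_moment_bound_general (p N : ℕ)
    (b γ D : ℝ) (hb : 0 < b) (hγ : γ ∈ Set.Ioo (0 : ℝ) 1)
    (q : Fin N → ℝ) (hq0 : ∀ n, 0 ≤ q n)
    (e : Fin N → Fin p → ℝ) (he0 : ∀ n j, 0 ≤ e n j) (hesum : ∀ n, ∑ j, e n j = b)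
    (π : Fin p → ℝ)
    (hπ : ∀ j, π j = (1 - γ) * ∑ n, q n * e n j + γ * b / p)
    (I : Finset (Fin p)) (d : Fin p → ℝ) (hd : ∀ j, 0 ≤ d j ∧ d j ≤ D)
    (dhat : Fin p → ℝ)
    (hdhat : ∀ j, dhat j = if j ∈ I then d j / π j else 0)
    (y : Fin N → ℝ) (hy : ∀ n, y n = ∑ j, e n j * dhat j) :
    ∑ n, q n * y n ^ 2 ≤ (b * D / (1 - γ)) * ∑ j ∈ I, dhat j := by
  obtain ⟨hγ0, hγ1⟩ := hγ
  have h1γ : 0 < 1 - γ := sub_pos.2 hγ1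
  have hmix (j) : (1 - γ) * ∑ n, q n * e n j ≤ π j := by
    rw [hπ j]
    have : 0 ≤ γ * b / p := by positivity
    linarith
  have hπ0 (j) : 0 ≤ π j :=
    (mul_nonneg h1γ.le (sum_nonneg fun n _ => mul_nonneg (hq0 n) (he0 n j))).trans (hmix j)
  have hdhat_I : ∑ j ∈ I, dhat j = ∑ j ∈ I, d j / π j :=
    sum_congr rfl fun j hj => by rw [hdhat j, if_pos hj]
  have hsq : ∑ j, π j * dhat j ^ 2 = ∑ j ∈ I, π j * (d j / π j) ^ 2 := by
    simp [hdhat]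
  calc ∑ n, q n * y n ^ 2 = ∑ n, q n * (∑ j, e n j * dhat j) ^ 2 := by simp only [hy]
    _ ≤ b * ∑ j, (∑ n, q n * e n j) * dhat j ^ 2 :=
        sum_mul_sq_sum_mul_le _ _ (fun n _ => hq0 n) (fun n _ j _ => he0 n j)
          (fun n _ => hesum n) dhat
    _ ≤ b * ∑ j, π j / (1 - γ) * dhat j ^ 2 := by
        gcongr with j
        exact (le_div_iff₀' h1γ).2 (hmix j)
    _ = b / (1 - γ) * ∑ j ∈ I, π j * (d j / π j) ^ 2 := by
        rw [← hsq, mul_sum, mul_sum]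
        exact sum_congr rfl fun j _ => by ring
    _ ≤ b / (1 - γ) * ∑ j ∈ I, D * (d j / π j) :=
        mul_le_mul_of_nonneg_left
          (sum_le_sum fun j _ => mul_div_sq_le (hπ0 j) (hd j).1 (hd j).2) (by positivity)
    _ = (b * D / (1 - γ)) * ∑ j ∈ I, dhat j := by
        rw [hdhat_I, ← mul_sum]
        ring

theorem exp4_second_moment_bound (p N : ℕ) (hp : 1 ≤ p) (hN : 1 ≤ N)
    (b γ D : ℝ) (hb : 0 < b) (hγ : γ ∈ Set.Ioo (0 : ℝ) 1) (hD : 0 ≤ D)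
    (q : Fin N → ℝ) (hq0 : ∀ n, 0 ≤ q n) (hq1 : ∑ n, q n = 1)
    (e : Fin N → Fin p → ℝ) (he0 : ∀ n j, 0 ≤ e n j) (hesum : ∀ n, ∑ j, e n j = b)
    (π : Fin p → ℝ)
    (hπ : ∀ j, π j = (1 - γ) * ∑ n, q n * e n j + γ * b / p)
    (I : Finset (Fin p)) (d : Fin p → ℝ) (hd : ∀ j, 0 ≤ d j ∧ d j ≤ D)
    (dhat : Fin p → ℝ)
    (hdhat : ∀ j, dhat j = if j ∈ I then d j / π j else 0)
    (y : Fin N → ℝ) (hy : ∀ n, y n = ∑ j, e n j * dhat j) :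
    ∑ n, q n * y n ^ 2 ≤ (b * D / (1 - γ)) * ∑ j ∈ I, dhat j :=
  exp4_second_moment_bound_general p N b γ D hb hγ q hq0 e he0 hesum π hπ I d hd dhat hdhat y hy
end

section
/- Let p ≥ 1 and let d_1,…,d_p be reals with 0 < d_1 ≤ d_2 ≤ … ≤ d_p, and let b be a real with 0 < b ≤ p. Suppose c ∈ {1,…,p} is the largest integer satisfying 0 < b + c − p ≤ Σ_{i=1}^c d_i / d_c. Define π*_j = (b + c − p)·d_j / (Σ_{i=1}^c d_i) for j ≤ c and π*_j = 1 for j > c. Then π* is feasible, i.e., 0 < π*_j ≤ 1 for all j and Σ_{j=1}^p π*_j = b, and π* minimizes the variance objective Σ_{j=1}^p d_j²·(1−π_j)/π_j over the feasible set { π ∈ ℝ^p : 0 < π_j ≤ 1 for all j, Σ_{j=1}^p π_j = b }. -/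
/-!
Write `S = ∑_{i ≤ c} d_i`, `α = b + c - p` and `λ = (S / α)²`. The objective is
`∑ d_j² / π_j - ∑ d_j²`, and `π*` satisfies the KKT conditions of the convex problem with
multiplier `λ`: for `j ≤ c`, `π*_j = d_j / √λ` is a stationary point of `d_j² / x + λ x`, and for
`j > c`, `π*_j = 1` with `λ ≤ d_j²`, which is what the maximality of `c` provides. Summing the
tangent-line inequalities `d_j² / π*_j ≤ d_j² / π_j + λ (π_j - π*_j)` proves optimality, because
`∑ π_j = ∑ π*_j`.
-/

open Finset

theorem div_le_div_add_div_sq_mul_sub {a x y : ℝ} (ha : 0 ≤ a) (hx : 0 < x) (hy : 0 < y) :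
    a / y ≤ a / x + a / y ^ 2 * (x - y) := by
  have hgap : a / x + a / y ^ 2 * (x - y) - a / y = a * (x - y) ^ 2 / (x * y ^ 2) := by
    field_simp
    ring
  have : 0 ≤ a * (x - y) ^ 2 / (x * y ^ 2) := by positivity
  linarith

theorem div_le_div_add_mul_sub_of_kkt {a x y lam : ℝ} (ha : 0 ≤ a) (hx : 0 < x) (hx1 : x ≤ 1)
    (hy : 0 < y) (hkkt : a = lam * y ^ 2 ∨ (y = 1 ∧ lam ≤ a)) :
    a / y ≤ a / x + lam * (x - y) := by
  rcases hkkt with hinterior | ⟨rfl, hlam⟩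
  · have hlam_eq : lam = a / y ^ 2 := by
      rw [hinterior]
      field_simp
    exact hlam_eq ▸ div_le_div_add_div_sq_mul_sub ha hx hy
  · have htangent := div_le_div_add_div_sq_mul_sub ha hx one_pos
    have hslack : a * (x - 1) ≤ lam * (x - 1) := mul_le_mul_of_nonpos_right hlam (by linarith)
    simp only [one_pow, div_one] at htangent ⊢
    linarith

theorem sum_sq_mul_one_sub_div_le_of_kkt {ι : Type*} {s : Finset ι} {d πstar π : ι → ℝ}
    (lam : ℝ) (hstar : ∀ j ∈ s, 0 < πstar j) (hπ : ∀ j ∈ s, 0 < π j ∧ π j ≤ 1)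
    (hsum : ∑ j ∈ s, π j = ∑ j ∈ s, πstar j)
    (hkkt : ∀ j ∈ s, d j ^ 2 = lam * πstar j ^ 2 ∨ (πstar j = 1 ∧ lam ≤ d j ^ 2)) :
    ∑ j ∈ s, d j ^ 2 * (1 - πstar j) / πstar j ≤ ∑ j ∈ s, d j ^ 2 * (1 - π j) / π j := by
  have hexpand (σ : ι → ℝ) (hσ : ∀ j ∈ s, 0 < σ j) :
      ∑ j ∈ s, d j ^ 2 * (1 - σ j) / σ j = ∑ j ∈ s, (d j ^ 2 / σ j - d j ^ 2) :=
    sum_congr rfl fun j hj => by field_simp [(hσ j hj).ne']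
  rw [hexpand πstar hstar, hexpand π fun j hj => (hπ j hj).1]
  calc ∑ j ∈ s, (d j ^ 2 / πstar j - d j ^ 2)
      ≤ ∑ j ∈ s, (d j ^ 2 / π j - d j ^ 2 + lam * (π j - πstar j)) :=
        sum_le_sum fun j hj => by
          linarith [div_le_div_add_mul_sub_of_kkt (sq_nonneg (d j)) (hπ j hj).1 (hπ j hj).2
            (hstar j hj) (hkkt j hj)]
    _ = ∑ j ∈ s, (d j ^ 2 / π j - d j ^ 2) := by
        rw [sum_add_distrib, ← mul_sum, sum_sub_distrib π, hsum, sub_self, mul_zero, add_zero]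

theorem monotoneOn_Icc_of_le_succ {β : Type*} [Preorder β] {f : ℕ → β} {m n : ℕ}
    (hf : ∀ i ∈ Ico m n, f i ≤ f (i + 1)) : MonotoneOn f (Set.Icc m n) :=
  monotoneOn_of_le_succ Set.ordConnected_Icc fun i _ hi hsucc =>
    hf i (mem_Ico.mpr ⟨hi.1, Nat.lt_of_succ_le hsucc.2⟩)

theorem sum_Icc_one_add_sum_Ioc {M : Type*} [AddCommMonoid M] (f : ℕ → M) {c p : ℕ}
    (hcp : c ≤ p) : ∑ i ∈ Icc 1 c, f i + ∑ i ∈ Ioc c p, f i = ∑ i ∈ Icc 1 p, f i := by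
  simpa only [← Icc_add_one_left_eq_Ioc, zero_add] using sum_Ioc_consecutive f c.zero_le hcp

theorem sum_Icc_ite_mul_div_sum_Icc (d : ℕ → ℝ) (α : ℝ) {c p : ℕ} (hcp : c ≤ p)
    (hS : ∑ i ∈ Icc 1 c, d i ≠ 0) :
    ∑ j ∈ Icc 1 p, (if j ≤ c then α * d j / ∑ i ∈ Icc 1 c, d i else 1) = α + (p - c) := by
  rw [← sum_Icc_one_add_sum_Ioc _ hcp,
    sum_congr rfl fun j hj => if_pos (mem_Icc.mp hj).2,
    sum_congr rfl fun j hj => if_neg (mem_Ioc.mp hj).1.not_ge,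
    ← sum_div, ← mul_sum, mul_div_cancel_right₀ _ hS, sum_const, Nat.card_Ioc, nsmul_one,
    Nat.cast_sub hcp]

theorem mul_le_sum_Icc_of_le {p c : ℕ} {d : ℕ → ℝ} {α : ℝ} (hmono : MonotoneOn d (Set.Icc 1 p))
    (hcp : c ≤ p) (hα : 0 < α) (hαc : α ≤ (∑ i ∈ Icc 1 c, d i) / d c) (hdc : 0 < d c)
    {j : ℕ} (hj1 : 1 ≤ j) (hjc : j ≤ c) : α * d j ≤ ∑ i ∈ Icc 1 c, d i :=
  calc α * d j ≤ α * d c := by gcongr; exact hmono ⟨hj1, hjc.trans hcp⟩ ⟨hj1.trans hjc, hcp⟩ hjc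
    _ ≤ ∑ i ∈ Icc 1 c, d i := (le_div_iff₀ hdc).mp hαc

theorem sum_Icc_le_mul_of_maximal {p c : ℕ} {d : ℕ → ℝ} {b : ℝ}
    (hmono : MonotoneOn d (Set.Icc 1 p)) (hpos : ∀ j ∈ Icc 1 p, 0 < d j) (hα : 0 < b + c - p)
    (hclargest : ∀ c' ∈ Icc 1 p,
      (0 < b + c' - p ∧ b + c' - p ≤ (∑ i ∈ Icc 1 c', d i) / d c') → c' ≤ c)
    {j : ℕ} (hcj : c < j) (hjp : j ≤ p) : ∑ i ∈ Icc 1 c, d i ≤ (b + c - p) * d j := by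
  have hnext : c + 1 ∈ Icc 1 p := mem_Icc.mpr ⟨by omega, by omega⟩
  have hdnext : 0 < d (c + 1) := hpos _ hnext
  have hfails : ∑ i ∈ Icc 1 c, d i + d (c + 1) < (b + c - p + 1) * d (c + 1) := by
    have hnot := mt (hclargest _ hnext) (by omega)
    push_cast at hnot
    rw [← sum_Icc_succ_top (by omega : 1 ≤ c + 1), ← div_lt_iff₀ hdnext]
    exact lt_of_not_ge fun h => hnot ⟨by linarith, by linarith⟩
  have hdj : d (c + 1) ≤ d j := hmono (mem_Icc.mp hnext) ⟨by omega, hjp⟩ hcj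
  linarith [mul_le_mul_of_nonneg_left hdj hα.le]

theorem optimal_sampling_probabilities_general (p : ℕ)
    (d : ℕ → ℝ) (hd1 : 0 < d 1)
    (hdmono : ∀ i ∈ Finset.Ico 1 p, d i ≤ d (i + 1))
    (b : ℝ)
    (c : ℕ) (hc : c ∈ Finset.Icc 1 p)
    (hcsat : 0 < b + c - p ∧ b + c - p ≤ (∑ i ∈ Finset.Icc 1 c, d i) / d c)
    (hclargest : ∀ c' ∈ Finset.Icc 1 p,
      (0 < b + c' - p ∧ b + c' - p ≤ (∑ i ∈ Finset.Icc 1 c', d i) / d c') → c' ≤ c)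
    (πstar : ℕ → ℝ)
    (hπstar : ∀ j ∈ Finset.Icc 1 p,
      πstar j = if j ≤ c then (b + c - p) * d j / (∑ i ∈ Finset.Icc 1 c, d i) else 1) :
    (∀ j ∈ Finset.Icc 1 p, 0 < πstar j ∧ πstar j ≤ 1) ∧
      (∑ j ∈ Finset.Icc 1 p, πstar j = b) ∧
      (∀ π : ℕ → ℝ, (∀ j ∈ Finset.Icc 1 p, 0 < π j ∧ π j ≤ 1) →
        (∑ j ∈ Finset.Icc 1 p, π j = b) →
        ∑ j ∈ Finset.Icc 1 p, d j ^ 2 * (1 - πstar j) / πstar j ≤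
          ∑ j ∈ Finset.Icc 1 p, d j ^ 2 * (1 - π j) / π j) := by
  obtain ⟨hc1, hcp⟩ := mem_Icc.mp hc
  obtain ⟨hα, hαc⟩ := hcsat
  have hmono := monotoneOn_Icc_of_le_succ hdmono
  have hpos (j) (hj : j ∈ Icc 1 p) : 0 < d j :=
    hd1.trans_le (hmono ⟨le_rfl, hc1.trans hcp⟩ (mem_Icc.mp hj) (mem_Icc.mp hj).1)
  set S := ∑ i ∈ Icc 1 c, d i
  set α : ℝ := b + c - p
  have hS : 0 < S :=
    sum_pos (fun i hi => hpos i (Icc_subset_Icc_right hcp hi)) ⟨c, mem_Icc.mpr ⟨hc1, le_rfl⟩⟩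
  have hfeas_kkt (j) (hj : j ∈ Icc 1 p) : (0 < πstar j ∧ πstar j ≤ 1) ∧
      (d j ^ 2 = (S / α) ^ 2 * πstar j ^ 2 ∨ (πstar j = 1 ∧ (S / α) ^ 2 ≤ d j ^ 2)) := by
    have hdj := hpos j hj
    rw [hπstar j hj]
    split_ifs with hjc
    · have hle := mul_le_sum_Icc_of_le hmono hcp hα hαc (hpos c hc) (mem_Icc.mp hj).1 hjc
      exact ⟨⟨by positivity, (div_le_one hS).mpr hle⟩, .inl (by field_simp)⟩
    · have hge : S ≤ α * d j :=
        sum_Icc_le_mul_of_maximal hmono hpos hα hclargest (not_le.mp hjc) (mem_Icc.mp hj).2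
      exact ⟨⟨one_pos, le_rfl⟩,
        .inr ⟨rfl, pow_le_pow_left₀ (by positivity) ((div_le_iff₀' hα).mpr hge) 2⟩⟩
  have hsum : ∑ j ∈ Icc 1 p, πstar j = b := by
    rw [sum_congr rfl hπstar, sum_Icc_ite_mul_div_sum_Icc d _ hcp hS.ne']
    ring
  exact ⟨fun j hj => (hfeas_kkt j hj).1, hsum, fun π hπ hπsum =>
    sum_sq_mul_one_sub_div_le_of_kkt _ (fun j hj => (hfeas_kkt j hj).1.1) hπ
      (hπsum.trans hsum.symm) fun j hj => (hfeas_kkt j hj).2⟩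

theorem optimal_sampling_probabilities (p : ℕ) (hp : 1 ≤ p)
    (d : ℕ → ℝ) (hd1 : 0 < d 1)
    (hdmono : ∀ i ∈ Finset.Ico 1 p, d i ≤ d (i + 1))
    (b : ℝ) (hb0 : 0 < b) (hbp : b ≤ p)
    (c : ℕ) (hc : c ∈ Finset.Icc 1 p)
    (hcsat : 0 < b + c - p ∧ b + c - p ≤ (∑ i ∈ Finset.Icc 1 c, d i) / d c)
    (hclargest : ∀ c' ∈ Finset.Icc 1 p,
      (0 < b + c' - p ∧ b + c' - p ≤ (∑ i ∈ Finset.Icc 1 c', d i) / d c') → c' ≤ c)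
    (πstar : ℕ → ℝ)
    (hπstar : ∀ j ∈ Finset.Icc 1 p,
      πstar j = if j ≤ c then (b + c - p) * d j / (∑ i ∈ Finset.Icc 1 c, d i) else 1) :
    (∀ j ∈ Finset.Icc 1 p, 0 < πstar j ∧ πstar j ≤ 1) ∧
      (∑ j ∈ Finset.Icc 1 p, πstar j = b) ∧
      (∀ π : ℕ → ℝ, (∀ j ∈ Finset.Icc 1 p, 0 < π j ∧ π j ≤ 1) →
        (∑ j ∈ Finset.Icc 1 p, π j = b) →
        ∑ j ∈ Finset.Icc 1 p, d j ^ 2 * (1 - πstar j) / πstar j ≤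
          ∑ j ∈ Finset.Icc 1 p, d j ^ 2 * (1 - π j) / π j) :=
  optimal_sampling_probabilities_general p d hd1 hdmono b c hc hcsat hclargest πstar hπstar
end
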